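/- arXiv:0909.0339 — 10 statements merged into one kernel-verified Lean document; each statement's English description precedes it below -/
import Mathlib

section
/- Let V be a type and G a simple graph on V that is a tree (connected and acyclic), with at least two vertices. Let A be a finite subset of V and let ℓ : V → Set V be a proper labelling of G relative to A. Then G contains a fully-labelled edge: there exist vertices x and y with G.Adj x y and A ⊆ ℓ(x) ∪ ℓ(y). -/
/-!
Suppose no edge is fully labelled. Then every vertex `v` misses a label, and since all labels
missing at `v` lie in one component of `G - v`, they all point to a single neighbour `f v`. On
the edge `{v, f v}` some label is missing at both ends; it lies beyond `f v` seen from `v` and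
beyond `f (f v)` seen from `f v`, which in a tree forces `f (f v) ≠ v`. So iterating `f` gives a
non-backtracking ray, and a label lying ahead of the ray at step `n` is at distance more than
`n` from its start. As `A` is finite, far enough along the ray no label lies ahead, yet the
vertex reached there still misses one.
-/

namespace SimpleGraph

variable {V : Type*} {G : SimpleGraph V}

/-- `x` and `y` lie in the same component of `G` minus `v`, expressed through walks of `G`. -/
def ReachableAvoiding (G : SimpleGraph V) (v x y : V) : Prop :=
  ∃ p : G.Walk x y, v ∉ p.support

namespace ReachableAvoiding

variable {v x y z : V}

lemma of_reachable_induce {hx : x ≠ v} {hy : y ≠ v}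
    (h : (G.induce {u | u ≠ v}).Reachable ⟨x, hx⟩ ⟨y, hy⟩) : G.ReachableAvoiding v x y := by
  obtain ⟨q⟩ := h
  let p : G.Walk x y := q.map (Embedding.induce {u | u ≠ v}).toHom
  refine ⟨p, fun hv => ?_⟩
  obtain ⟨u, -, hu⟩ := List.mem_map.mp (Walk.support_map _ q ▸ hv)
  exact u.2 hu

lemma trans (hxy : G.ReachableAvoiding v x y) (hyz : G.ReachableAvoiding v y z) :
    G.ReachableAvoiding v x z := by
  obtain ⟨p, hp⟩ := hxy
  obtain ⟨q, hq⟩ := hyz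
  exact ⟨p.append q, by simp [Walk.mem_support_append_iff, hp, hq]⟩

lemma exists_isPath (h : G.ReachableAvoiding v x y) :
    ∃ p : G.Walk x y, p.IsPath ∧ v ∉ p.support := by
  classical
  obtain ⟨p, hp⟩ := h
  exact ⟨p.bypass, p.bypass_isPath, fun hv => hp (p.support_bypass_subset_support hv)⟩

end ReachableAvoiding

lemma Preconnected.exists_adj_reachableAvoiding (hG : G.Preconnected) {v x : V} (hxv : x ≠ v) :
    ∃ w, G.Adj v w ∧ G.ReachableAvoiding v w x := by
  obtain ⟨p, hp⟩ := (hG v x).exists_isPath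
  cases p with
  | nil => exact absurd rfl hxv
  | cons hvw q => exact ⟨_, hvw, q, (Walk.cons_isPath_iff _ _).mp hp |>.2⟩

namespace IsAcyclic

variable (hG : G.IsAcyclic)
include hG

lemma length_eq_dist_of_isPath {x y : V} {p : G.Walk x y} (hp : p.IsPath) :
    p.length = G.dist x y := by
  obtain ⟨q, hq⟩ := p.reachable.exists_walk_length_eq_dist
  have : (⟨p, hp⟩ : G.Path x y) = ⟨q, q.isPath_of_length_eq_dist hq⟩ :=
    (hG.subsingleton_path x y).elim _ _
  rw [← hq, Subtype.mk.inj this]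

lemma not_reachableAvoiding_of_adj {v w x : V} (hvw : G.Adj v w)
    (h : G.ReachableAvoiding v w x) : ¬ G.ReachableAvoiding w v x := by
  intro h'
  obtain ⟨p, hp, hvp⟩ := h.exists_isPath
  obtain ⟨q, hq, hwq⟩ := h'.exists_isPath
  have := hG.mem_support_of_ne_mem_support_of_adj_of_isPath hq.reverse hp.reverse hvw
    (by simpa using hvp)
  exact hwq (by simpa using this)

lemma dist_eq_dist_add_one_of_reachableAvoiding {v w x : V} (hvw : G.Adj v w)
    (h : G.ReachableAvoiding v w x) : G.dist v x = G.dist w x + 1 := by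
  obtain ⟨p, hp, hvp⟩ := h.exists_isPath
  rw [← hG.length_eq_dist_of_isPath hp,
    ← hG.length_eq_dist_of_isPath (hp.cons hvp : (Walk.cons hvw p).IsPath), Walk.length_cons]

lemma reachableAvoiding_of_adj_of_adj {u v w x : V} (huv : G.Adj u v) (hvw : G.Adj v w)
    (huw : u ≠ w) (h : G.ReachableAvoiding v w x) : G.ReachableAvoiding u v x := by
  classical
  obtain ⟨p, hvp⟩ := h
  have hup : u ∉ p.support := fun hu =>
    hG.not_reachableAvoiding_of_adj hvw
      ⟨p.takeUntil u hu, fun hv => hvp (p.support_takeUntil_subset_support hu hv)⟩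
      ⟨.cons huv.symm .nil, by simp [hvw.ne', huw.symm]⟩
  exact ⟨.cons hvw p, by simp [huv.ne, hup]⟩

lemma dist_eq_of_reachableAvoiding_of_nonbacktracking {u : ℕ → V}
    (hadj : ∀ n, G.Adj (u n) (u (n + 1))) (hback : ∀ n, u (n + 2) ≠ u n) {x : V} :
    ∀ {n}, G.ReachableAvoiding (u n) (u (n + 1)) x →
      G.dist (u 0) x = G.dist (u (n + 1)) x + (n + 1)
  | 0, h => hG.dist_eq_dist_add_one_of_reachableAvoiding (hadj 0) h
  | n + 1, h => by
    have ih := dist_eq_of_reachableAvoiding_of_nonbacktracking hadj hback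
      (hG.reachableAvoiding_of_adj_of_adj (hadj n) (hadj (n + 1)) (hback n).symm h)
    have := hG.dist_eq_dist_add_one_of_reachableAvoiding (hadj (n + 1)) h
    omega

lemma exists_forall_not_reachableAvoiding [Nonempty V] (f : V → V)
    (hadj : ∀ v, G.Adj v (f v)) (hback : ∀ v, f (f v) ≠ v) {A : Set V} (hA : A.Finite) :
    ∃ v, ∀ a ∈ A, ¬ G.ReachableAvoiding v (f v) a := by
  obtain ⟨v₀⟩ := ‹Nonempty V›
  obtain ⟨N, hN⟩ := (hA.image (G.dist v₀)).bddAbove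
  refine ⟨f^[N] v₀, fun a ha h => ?_⟩
  have hray := hG.dist_eq_of_reachableAvoiding_of_nonbacktracking (u := fun n => f^[n] v₀)
    (fun n => by simpa only [Function.iterate_succ_apply'] using hadj _)
    (fun n => by simpa only [Function.iterate_succ_apply'] using hback _)
    (n := N) (by simpa only [Function.iterate_succ_apply'] using h)
  have := hN ⟨a, ha, rfl⟩
  simp only [Function.iterate_zero, id_eq] at hray
  omega

end IsAcyclic

end SimpleGraph

theorem sperner_tree_general
    {V : Type*} (G : SimpleGraph V) (hG : G.IsTree) (hV : Nontrivial V)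
    (A : Set V) (hA : A.Finite) (ℓ : V → Set V)
    (hproper₂ : ∀ v : V, ∀ a ∈ A \ ℓ v, ∀ b ∈ A \ ℓ v,
      ∃ (ha : a ≠ v) (hb : b ≠ v),
        (G.induce {u : V | u ≠ v}).Reachable ⟨a, ha⟩ ⟨b, hb⟩) :
    ∃ x y : V, G.Adj x y ∧ A ⊆ ℓ x ∪ ℓ y := by
  by_contra! hcon
  have hmiss : ∀ v, (A \ ℓ v).Nonempty := fun v => by
    obtain ⟨w, hvw⟩ := hG.connected.preconnected.exists_adj_of_nontrivial v
    by_contra! h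
    exact hcon v w hvw ((Set.sdiff_eq_empty.mp h).trans Set.subset_union_left)
  have hstep : ∀ v, ∃ w, G.Adj v w ∧ ∀ a ∈ A \ ℓ v, G.ReachableAvoiding v w a := fun v => by
    obtain ⟨a₀, ha₀⟩ := hmiss v
    obtain ⟨ha₀v, -, -⟩ := hproper₂ v a₀ ha₀ a₀ ha₀
    obtain ⟨w, hvw, hw⟩ := hG.connected.preconnected.exists_adj_reachableAvoiding ha₀v
    refine ⟨w, hvw, fun a ha => hw.trans ?_⟩
    obtain ⟨_, _, h⟩ := hproper₂ v a₀ ha₀ a ha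
    exact .of_reachable_induce h
  choose f hadj hbeyond using hstep
  have hback : ∀ v, f (f v) ≠ v := fun v hv => by
    obtain ⟨a, haA, ha⟩ := Set.not_subset.mp (hcon v (f v) (hadj v))
    have hfa := hbeyond (f v) a ⟨haA, fun h => ha (Or.inr h)⟩
    rw [hv] at hfa
    exact hG.isAcyclic.not_reachableAvoiding_of_adj (hadj v)
      (hbeyond v a ⟨haA, fun h => ha (Or.inl h)⟩) hfa
  obtain ⟨v, hv⟩ := hG.isAcyclic.exists_forall_not_reachableAvoiding f hadj hback hA
  obtain ⟨a, ha⟩ := hmiss v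
  exact hv a ha.1 (hbeyond v a ha)

/-- **Sperner-type lemma for trees.** If `G` is a tree on a vertex type `V` with at least
two vertices, `A` is a finite set of labels (vertices), and `ℓ` is a proper labelling of
`G` relative to `A` (every `a ∈ A` has `a ∈ ℓ a`, and for every vertex `v` all labels of
`A` missing from `ℓ v` are distinct from `v` and lie in a single component of `G` minus
`v`), then `G` has a fully-labelled edge. -/
theorem sperner_tree
    {V : Type*} (G : SimpleGraph V) (hG : G.IsTree) (hV : Nontrivial V)
    (A : Set V) (hA : A.Finite) (ℓ : V → Set V)
    (hproper₁ : ∀ a ∈ A, a ∈ ℓ a)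
    (hproper₂ : ∀ v : V, ∀ a ∈ A \ ℓ v, ∀ b ∈ A \ ℓ v,
      ∃ (ha : a ≠ v) (hb : b ≠ v),
        (G.induce {u : V | u ≠ v}).Reachable ⟨a, ha⟩ ⟨b, hb⟩) :
    ∃ x y : V, G.Adj x y ∧ A ⊆ ℓ x ∪ ℓ y :=
  sperner_tree_general G hG hV A hA ℓ hproper₂
end

section
/- Let V be a finite type, G a simple graph on V that is a tree, and f : V → V any function. Then either f fixes some vertex (there is v with f(v) = v), or there exist adjacent vertices x and y such that f(x) and f(y) are not reachable from each other in the graph obtained from G by deleting the edge {x, y}; equivalently, the edge {x, y} lies on the unique path from f(x) to f(y). -/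
/-!
Suppose `f` has no fixed point. Each vertex `v` then has a neighbour `g v`, the first step of
the path from `v` to `f v`, such that `f v` stays on the side of `g v` once the edge
`{v, g v}` is deleted. A tree has fewer edges than vertices, so two vertices choose the same
edge, i.e. `g y = x` for `y = g x`. If `f x` and `f y` were still connected after deleting
`{x, y}`, so would be `y ~ f x ~ f y ~ x`, contradicting that every edge of a tree is a bridge.
-/

namespace SimpleGraph

variable {V : Type*} {G : SimpleGraph V}

theorem Reachable.exists_adj_reachable_deleteEdges {v w : V} (hvw : G.Reachable v w)
    (hne : v ≠ w) : ∃ y, G.Adj v y ∧ (G.deleteEdges {s(v, y)}).Reachable y w := by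
  obtain ⟨p, hp⟩ := hvw.exists_isPath
  cases p with
  | nil => exact absurd rfl hne
  | @cons _ y _ hadj q =>
    have hv : v ∉ q.support := (Walk.cons_isPath_iff hadj q).1 hp |>.2
    refine ⟨y, hadj, ⟨q.toDeleteEdges {s(v, y)} ?_⟩⟩
    rintro e he rfl
    exact hv (q.fst_mem_support_of_mem_edges he)

theorem exists_apply_apply_eq_of_card_edgeSet_lt [Fintype V] [Fintype G.edgeSet]
    (hcard : Fintype.card G.edgeSet < Fintype.card V) {g : V → V} (hg : ∀ v, G.Adj v (g v)) :
    ∃ x, g (g x) = x := by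
  obtain ⟨x, y, hxy, heq⟩ :=
    Fintype.exists_ne_map_eq_of_card_lt (fun v ↦ (⟨s(v, g v), hg v⟩ : G.edgeSet)) hcard
  rcases Sym2.eq_iff.1 (Subtype.ext_iff.1 heq) with ⟨h, -⟩ | ⟨hxgy, hgxy⟩
  · exact absurd h hxy
  · exact ⟨x, by rw [hgxy, ← hxgy]⟩

end SimpleGraph

open SimpleGraph

/-- **Discrete fixed point theorem for trees.** If `G` is a tree on a finite vertex type
`V` and `f : V → V` is any function, then either `f` fixes some vertex, or there is an
edge `{x, y}` of `G` such that `f x` and `f y` are not reachable from each other after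
deleting the edge `{x, y}`, i.e. the edge `{x, y}` lies on the unique path from `f x`
to `f y`. -/
theorem tree_discrete_fixed_point
    {V : Type*} [Fintype V] (G : SimpleGraph V) (hG : G.IsTree) (f : V → V) :
    (∃ v : V, f v = v) ∨
      ∃ x y : V, G.Adj x y ∧
        ¬ (G.deleteEdges {s(x, y)}).Reachable (f x) (f y) := by
  classical
  by_contra! ⟨hfix, hcut⟩
  choose g hadj hreach using fun v ↦
    (hG.connected.preconnected v (f v)).exists_adj_reachable_deleteEdges (hfix v).symm
  have hcard : Fintype.card G.edgeSet < Fintype.card V := by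
    have := hG.card_edgeFinset
    rw [← edgeFinset_card]
    omega
  obtain ⟨x, hx⟩ := exists_apply_apply_eq_of_card_edgeSet_lt hcard hadj
  set y := g x
  have hfy : (G.deleteEdges {s(x, y)}).Reachable x (f y) := by
    simpa only [hx, Sym2.eq_swap] using hreach y
  exact isAcyclic_iff_forall_adj_isBridge.1 hG.isAcyclic (hadj x)
    (hfy.trans (hcut x y (hadj x)).symm |>.trans (hreach x).symm)
end

section
/- Let V be a type, G a simple graph on V that is a tree, A ⊆ V a set of vertices (possibly infinite), and D a family of subsets of V indexed by the elements of A such that (i) a ∈ D(a) for every a ∈ A, and (ii) for all a, b ∈ A, every vertex lying on any path in G from a to b belongs to D(a) ∪ D(b). Define the membership labelling ℓ : V → Set V by ℓ(v) = {a ∈ A : v ∈ D(a)}. Then ℓ is a proper labelling relative to A: every a ∈ A satisfies a ∈ ℓ(a), and for every vertex v, any two labels a, b ∈ A \ ℓ(v) are both distinct from v and lie in the same component of G minus v. -/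
theorem SimpleGraph.Preconnected.exists_reachable_induce_ne {V : Type*} {G : SimpleGraph V}
    (hG : G.Preconnected) {a b v : V} {S : Set V}
    (hS : ∀ p : G.Walk a b, p.IsPath → ∀ u ∈ p.support, u ∈ S) (hv : v ∉ S) :
    ∃ (ha : a ≠ v) (hb : b ≠ v), (G.induce {u : V | u ≠ v}).Reachable ⟨a, ha⟩ ⟨b, hb⟩ := by
  obtain ⟨p, hp⟩ := hG.exists_isPath a b
  have havoid : ∀ u ∈ p.support, u ∈ {u : V | u ≠ v} :=
    fun u hu => ne_of_mem_of_not_mem (hS p hp u hu) hv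
  exact ⟨havoid a p.start_mem_support, havoid b p.end_mem_support, ⟨p.induce _ havoid⟩⟩

/-- **The membership labelling of a KKM cover of a tree is proper.** Let `G` be a tree on
`V`, let `A ⊆ V`, and let `D` assign to each element of `A` a set of vertices such that
`a ∈ D a` for every `a ∈ A` and, for all `a, b ∈ A`, every vertex on any path in `G`
from `a` to `b` lies in `D a ∪ D b`. Then the membership labelling
`ℓ v = {a ∈ A : v ∈ D a}` is a proper labelling relative to `A`: every `a ∈ A` satisfies
`a ∈ ℓ a`, and for every vertex `v` any two labels `a, b ∈ A \ ℓ v` are distinct from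
`v` and lie in the same component of `G` minus `v`. -/
theorem membership_labelling_proper
    {V : Type*} (G : SimpleGraph V) (hG : G.IsTree)
    (A : Set V) (D : V → Set V)
    (hmem : ∀ a ∈ A, a ∈ D a)
    (hpath : ∀ a ∈ A, ∀ b ∈ A, ∀ p : G.Walk a b, p.IsPath →
      ∀ u ∈ p.support, u ∈ D a ∪ D b)
    (ℓ : V → Set V) (hℓ : ℓ = fun v => {a ∈ A | v ∈ D a}) :
    (∀ a ∈ A, a ∈ ℓ a) ∧
      ∀ v : V, ∀ a ∈ A \ ℓ v, ∀ b ∈ A \ ℓ v,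
        ∃ (ha : a ≠ v) (hb : b ≠ v),
          (G.induce {u : V | u ≠ v}).Reachable ⟨a, ha⟩ ⟨b, hb⟩ := by
  subst hℓ
  refine ⟨fun a ha => ⟨ha, hmem a ha⟩, ?_⟩
  rintro v a ⟨haA, hva⟩ b ⟨hbA, hvb⟩
  have hv : v ∉ D a ∪ D b := by
    rintro (h | h)
    exacts [hva ⟨haA, h⟩, hvb ⟨hbA, h⟩]
  exact hG.connected.preconnected.exists_reachable_induce_ne (hpath a haA b hbA) hv
end

section
/- Let V be a type, G a simple graph on V that is a tree with at least two vertices, A a finite subset of V, and D a family of subsets of V indexed by the elements of A such that (i) a ∈ D(a) for every a ∈ A, and (ii) for all a, b ∈ A, every vertex lying on any path in G from a to b belongs to D(a) ∪ D(b). Then there exist adjacent vertices x and y such that for every a ∈ A, x ∈ D(a) or y ∈ D(a). -/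
/-!
For adjacent `u` and `w` in a tree, read `G.dist a u = G.dist a w + 1` as "seen from `u`, `a`
lies beyond `w`". By (ii), the indices `a ∈ A` with `u ∉ D a` all lie beyond a single neighbour
of `u`, since otherwise `u` is on the path between two of them.

Call an edge good if every `D a` meets it, and suppose `vw` is not good, witnessed by `a` with
`v, w ∉ D a`. Then `a` lies beyond `w` seen from `v`, and the neighbour `w'` of `w` towards `a`
gives an edge `ww'` of the same kind, pointing away from `v`. Every index beyond `w'` seen from
`w` is beyond `w` seen from `v` and one step closer, so the largest distance from `w` to an index
beyond it drops strictly; as `A` is finite, the walk ends at a good edge.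
-/

namespace SimpleGraph

open Walk

variable {V : Type*} {G : SimpleGraph V}

lemma Walk.dist_eq_dist_snd_add_one {u v : V} (p : G.Walk u v) (hp : p.length = G.dist u v)
    (hnil : ¬ p.Nil) : G.dist v u = G.dist v p.snd + 1 := by
  cases p with
  | nil => exact absurd Walk.Nil.nil hnil
  | cons h q =>
    obtain ⟨r, hr⟩ := q.reachable.exists_walk_length_eq_dist
    have hq := dist_le q
    have hr' := dist_le (cons h r)
    simp only [length_cons] at hp hr'
    rw [snd_cons, dist_comm, dist_comm (u := v)]
    omega

lemma Reachable.exists_adj_dist_eq_add_one {u v : V} (h : G.Reachable u v) (huv : u ≠ v) :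
    ∃ w, G.Adj u w ∧ G.dist v u = G.dist v w + 1 := by
  obtain ⟨p, hp⟩ := h.exists_walk_length_eq_dist
  have hnil : ¬ p.Nil := fun h => huv h.eq
  exact ⟨p.snd, p.adj_snd hnil, p.dist_eq_dist_snd_add_one hp hnil⟩

lemma IsAcyclic.eq_of_adj_of_dist_eq_add_one (hG : G.IsAcyclic) {a u v v' : V}
    (hv : G.Adj u v) (hv' : G.Adj u v') (hva : G.dist a u = G.dist a v + 1)
    (hv'a : G.dist a u = G.dist a v' + 1) : v = v' := by
  have hua : G.Reachable u a := (Reachable.of_dist_ne_zero (by omega)).symm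
  obtain ⟨p, -, hp⟩ := (hv.reachable.symm.trans hua).exists_path_of_dist
  obtain ⟨p', -, hp'⟩ := (hv'.reachable.symm.trans hua).exists_path_of_dist
  have hpath : (cons hv p).IsPath :=
    (cons hv p).isPath_of_length_eq_dist (by rw [length_cons, hp, dist_comm, ← hva, dist_comm])
  have hpath' : (cons hv' p').IsPath := (cons hv' p').isPath_of_length_eq_dist
    (by rw [length_cons, hp', dist_comm, ← hv'a, dist_comm])
  have := congrArg (fun q : G.Path u a => q.1.snd)
    ((hG.subsingleton_path u a).elim ⟨_, hpath⟩ ⟨_, hpath'⟩)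
  simpa using this

lemma IsAcyclic.isPath_reverse_append (hG : G.IsAcyclic) {u a b : V} {p : G.Walk u a}
    {q : G.Walk u b} (hp : p.IsPath) (hq : q.IsPath) (hpq : p.snd ≠ q.snd) :
    (p.reverse.append q).IsPath := by
  classical
  have hq' := hq.support_nodup
  rw [← cons_tail_support q, List.nodup_cons] at hq'
  rw [isPath_def, support_append, support_reverse]
  refine (List.nodup_reverse.mpr hp.support_nodup).append hq'.2 fun z hzp hzq => hpq ?_
  have hzu : z ≠ u := fun h => hq'.1 (h ▸ hzq)
  have hzq' : z ∈ q.support := List.mem_of_mem_tail hzq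
  have hzp' : z ∈ p.support := List.mem_reverse.mp hzp
  have := congrArg (fun r : G.Path u z => r.1.snd)
    ((hG.subsingleton_path u z).elim ⟨_, hp.takeUntil hzp'⟩ ⟨_, hq.takeUntil hzq'⟩)
  simpa only [snd_takeUntil hzu] using this

lemma IsAcyclic.exists_isPath_mem_support_of_adj_of_adj (hG : G.IsAcyclic) {a b u w w' : V}
    (hw : G.Adj u w) (hw' : G.Adj u w') (hne : w ≠ w')
    (ha : G.dist a u = G.dist a w + 1) (hb : G.dist b u = G.dist b w' + 1) :
    ∃ p : G.Walk a b, p.IsPath ∧ u ∈ p.support := by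
  have hua : G.Reachable u a := (Reachable.of_dist_ne_zero (by omega)).symm
  have hub : G.Reachable u b := (Reachable.of_dist_ne_zero (by omega)).symm
  obtain ⟨p, hp, hpl⟩ := hua.exists_path_of_dist
  obtain ⟨q, hq, hql⟩ := hub.exists_path_of_dist
  have hpnil : ¬ p.Nil := by rw [← length_eq_zero_iff, hpl, dist_comm]; omega
  have hqnil : ¬ q.Nil := by rw [← length_eq_zero_iff, hql, dist_comm]; omega
  have hps : p.snd = w := hG.eq_of_adj_of_dist_eq_add_one (p.adj_snd hpnil) hw
    (p.dist_eq_dist_snd_add_one hpl hpnil) ha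
  have hqs : q.snd = w' := hG.eq_of_adj_of_dist_eq_add_one (q.adj_snd hqnil) hw'
    (q.dist_eq_dist_snd_add_one hql hqnil) hb
  exact ⟨_, hG.isPath_reverse_append hp hq (hps ▸ hqs ▸ hne), by simp⟩

lemma IsAcyclic.dist_eq_dist_add_one_of_adj_of_adj (hG : G.IsAcyclic) {c v w w' : V}
    (hvw : G.Adj v w) (hww' : G.Adj w w') (hne : w' ≠ v)
    (h : G.dist c w = G.dist c w' + 1) : G.dist c v = G.dist c w + 1 := by
  have hcw : G.Reachable c w := Reachable.of_dist_ne_zero (by omega)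
  rcases hG.dist_eq_dist_add_one_of_adj_of_reachable c hvw (hcw.trans hvw.reachable.symm)
    with h' | h'
  · exact h'
  · exact absurd (hG.eq_of_adj_of_dist_eq_add_one hvw.symm hww' h' h) hne.symm

structure IsKKMCover (G : SimpleGraph V) (A : Set V) (D : V → Set V) : Prop where
  mem_self : ∀ a ∈ A, a ∈ D a
  mem_union_of_mem_support : ∀ a ∈ A, ∀ b ∈ A, ∀ p : G.Walk a b, p.IsPath →
    ∀ u ∈ p.support, u ∈ D a ∪ D b

namespace IsKKMCover

variable {A : Set V} {D : V → Set V}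

lemma ne_of_notMem (hD : G.IsKKMCover A D) {a u : V} (ha : a ∈ A) (hu : u ∉ D a) : u ≠ a :=
  fun h => hu (h ▸ hD.mem_self a ha)

lemma dist_eq_dist_add_one_of_notMem (hG : G.IsTree) (hD : G.IsKKMCover A D) {a b u w : V}
    (ha : a ∈ A) (hb : b ∈ A) (hua : u ∉ D a) (hub : u ∉ D b) (hw : G.Adj u w)
    (hwa : G.dist a u = G.dist a w + 1) : G.dist b u = G.dist b w + 1 := by
  obtain ⟨w', hw', hw'b⟩ :=
    (hG.connected u b).exists_adj_dist_eq_add_one (hD.ne_of_notMem hb hub)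
  obtain rfl | hne := eq_or_ne w w'
  · exact hw'b
  · obtain ⟨p, hp, hup⟩ :=
      hG.isAcyclic.exists_isPath_mem_support_of_adj_of_adj hw hw' hne hwa hw'b
    exact ((hD.mem_union_of_mem_support a ha b hb p hp u hup).elim hua hub).elim

lemma exists_adj_forall_mem_or_mem_of_dist_lt (hG : G.IsTree) (hD : G.IsKKMCover A D) (n : ℕ)
    {a₀ v w : V} (hvw : G.Adj v w) (ha₀ : a₀ ∈ A) (hva₀ : v ∉ D a₀)
    (hwa₀ : G.dist a₀ v = G.dist a₀ w + 1)
    (hn : ∀ c ∈ A, G.dist c v = G.dist c w + 1 → G.dist c w < n) :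
    ∃ x y : V, G.Adj x y ∧ ∀ a ∈ A, x ∈ D a ∨ y ∈ D a := by
  induction n generalizing a₀ v w with
  | zero => exact absurd (hn a₀ ha₀ hwa₀) (Nat.not_lt_zero _)
  | succ n ih =>
    by_cases hgood : ∀ a ∈ A, v ∈ D a ∨ w ∈ D a
    · exact ⟨v, w, hvw, hgood⟩
    push Not at hgood
    obtain ⟨a, ha, hva, hwa⟩ := hgood
    have hawv : G.dist a v = G.dist a w + 1 :=
      hD.dist_eq_dist_add_one_of_notMem hG ha₀ ha hva₀ hva hvw hwa₀
    obtain ⟨w', hww', haw'⟩ :=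
      (hG.connected w a).exists_adj_dist_eq_add_one (hD.ne_of_notMem ha hwa)
    have hw'v : w' ≠ v := by rintro rfl; omega
    refine ih hww' ha hwa haw' fun c hc hcw' => ?_
    have := hn c hc (hG.isAcyclic.dist_eq_dist_add_one_of_adj_of_adj hvw hww' hw'v hcw')
    omega

end IsKKMCover

end SimpleGraph

open SimpleGraph in
/-- **Combinatorial Tree KKM theorem.** Let `G` be a tree on `V` with at least two
vertices, `A` a finite subset of `V`, and `D` a family of subsets of `V` indexed by the
elements of `A` such that `a ∈ D a` for every `a ∈ A`, and for all `a, b ∈ A` every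
vertex lying on any path in `G` from `a` to `b` belongs to `D a ∪ D b`. Then there are
adjacent vertices `x` and `y` such that for every `a ∈ A`, `x ∈ D a` or `y ∈ D a`. -/
theorem tree_kkm_combinatorial
    {V : Type*} (G : SimpleGraph V) (hG : G.IsTree) (hV : Nontrivial V)
    (A : Set V) (hA : A.Finite) (D : V → Set V)
    (hmem : ∀ a ∈ A, a ∈ D a)
    (hpath : ∀ a ∈ A, ∀ b ∈ A, ∀ p : G.Walk a b, p.IsPath →
      ∀ u ∈ p.support, u ∈ D a ∪ D b) :
    ∃ x y : V, G.Adj x y ∧ ∀ a ∈ A, x ∈ D a ∨ y ∈ D a := by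
  have hD : G.IsKKMCover A D := ⟨hmem, hpath⟩
  obtain ⟨v, v', hvv'⟩ := exists_pair_ne V
  by_cases hv : ∀ a ∈ A, v ∈ D a
  · obtain ⟨w, hvw, -⟩ := (hG.connected v v').exists_adj_dist_eq_add_one hvv'
    exact ⟨v, w, hvw, fun a ha => Or.inl (hv a ha)⟩
  push Not at hv
  obtain ⟨a, ha, hva⟩ := hv
  obtain ⟨w, hvw, hwa⟩ :=
    (hG.connected v a).exists_adj_dist_eq_add_one (hD.ne_of_notMem ha hva)
  obtain ⟨N, hN⟩ := (hA.image (G.dist · w)).bddAbove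
  exact hD.exists_adj_forall_mem_or_mem_of_dist_lt hG (N + 1) hvw ha hva hwa
    fun c hc _ => Nat.lt_succ_of_le (hN ⟨c, hc, rfl⟩)
end

section
/- Let A be a nonempty finite set of real numbers and for each a ∈ A let D(a) ⊆ ℝ be a closed set with a ∈ D(a). Suppose that for all a, b ∈ A, the closed interval between a and b (Set.uIcc a b) is contained in D(a) ∪ D(b). Then the intersection ⋂_{a ∈ A} D(a) is nonempty. -/
/-!
Call `t` *left-defective* if `t ∉ D a` for some `a ∈ A` with `a < t`, and *right-defective* if
`t ∉ D b` for some `b ∈ A` with `t < b`. Both sets are open because the `D a` are closed, and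
they are disjoint because such a `t` would lie in `[a, b] \ (D a ∪ D b)`. A point that is
neither lies in every `D a` (for `a = t` because `t ∈ D t`). A lower bound of `A` is not
left-defective and an upper bound is not right-defective, so if every point were defective the
space would split into two disjoint nonempty open sets, contradicting connectedness.
-/

open Set

namespace KKM

variable {X : Type*} [LinearOrder X]

def leftDefect (A : Set X) (D : X → Set X) : Set X := ⋃ a ∈ A, Ioi a \ D a

def rightDefect (A : Set X) (D : X → Set X) : Set X := ⋃ b ∈ A, Iio b \ D b

variable {A : Set X} {D : X → Set X} {t : X}

theorem disjoint_leftDefect_rightDefect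
    (hpath : ∀ a ∈ A, ∀ b ∈ A, uIcc a b ⊆ D a ∪ D b) :
    Disjoint (leftDefect A D) (rightDefect A D) := by
  refine Set.disjoint_left.2 fun t htL htR => ?_
  simp only [leftDefect, rightDefect, mem_iUnion₂, mem_sdiff, mem_Ioi, mem_Iio] at htL htR
  obtain ⟨a, ha, hat, htDa⟩ := htL
  obtain ⟨b, hb, htb, htDb⟩ := htR
  rcases hpath a ha b hb (mem_uIcc_of_le hat.le htb.le) with h | h
  exacts [htDa h, htDb h]

theorem notMem_leftDefect_of_mem_lowerBounds (ht : t ∈ lowerBounds A) :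
    t ∉ leftDefect A D := by
  simp only [leftDefect, mem_iUnion₂, mem_sdiff, mem_Ioi, not_exists, not_and]
  exact fun a ha hat => absurd (ht ha) hat.not_ge

theorem notMem_rightDefect_of_mem_upperBounds (ht : t ∈ upperBounds A) :
    t ∉ rightDefect A D := by
  simp only [rightDefect, mem_iUnion₂, mem_sdiff, mem_Iio, not_exists, not_and]
  exact fun b hb htb => absurd (ht hb) htb.not_ge

theorem mem_biInter_of_notMem_defect (hmem : ∀ a ∈ A, a ∈ D a)
    (htL : t ∉ leftDefect A D) (htR : t ∉ rightDefect A D) : t ∈ ⋂ a ∈ A, D a := by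
  simp only [leftDefect, rightDefect, mem_iUnion₂, mem_sdiff, mem_Ioi, mem_Iio, not_exists,
    not_and, not_not] at htL htR
  refine mem_iInter₂.2 fun a ha => ?_
  rcases lt_trichotomy a t with hat | rfl | hta
  exacts [htL a ha hat, hmem a ha, htR a ha hta]

section Topology

variable [TopologicalSpace X] [OrderClosedTopology X]

theorem isOpen_leftDefect (hclosed : ∀ a ∈ A, IsClosed (D a)) :
    IsOpen (leftDefect A D) :=
  isOpen_biUnion fun a ha => isOpen_Ioi.sdiff (hclosed a ha)

theorem isOpen_rightDefect (hclosed : ∀ a ∈ A, IsClosed (D a)) :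
    IsOpen (rightDefect A D) :=
  isOpen_biUnion fun b hb => isOpen_Iio.sdiff (hclosed b hb)

theorem nonempty_biInter_of_uIcc_subset_union [PreconnectedSpace X]
    (hbelow : BddBelow A) (habove : BddAbove A) (hclosed : ∀ a ∈ A, IsClosed (D a))
    (hmem : ∀ a ∈ A, a ∈ D a) (hpath : ∀ a ∈ A, ∀ b ∈ A, uIcc a b ⊆ D a ∪ D b) :
    (⋂ a ∈ A, D a).Nonempty := by
  by_contra hempty
  have hcover : univ ⊆ leftDefect A D ∪ rightDefect A D := fun t _ => by
    by_contra ht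
    rw [mem_union, not_or] at ht
    exact hempty ⟨t, mem_biInter_of_notMem_defect hmem ht.1 ht.2⟩
  obtain ⟨l, hl⟩ := hbelow
  obtain ⟨u, hu⟩ := habove
  have hlR : l ∈ rightDefect A D :=
    (hcover (mem_univ l)).resolve_left (notMem_leftDefect_of_mem_lowerBounds hl)
  have huL : u ∈ leftDefect A D :=
    (hcover (mem_univ u)).resolve_right (notMem_rightDefect_of_mem_upperBounds hu)
  obtain ⟨t, -, htL, htR⟩ := isPreconnected_univ _ _ (isOpen_leftDefect hclosed)
    (isOpen_rightDefect hclosed) hcover ⟨u, mem_univ u, huL⟩ ⟨l, mem_univ l, hlR⟩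
  exact Set.disjoint_left.1 (disjoint_leftDefect_rightDefect hpath) htL htR

end Topology

end KKM

theorem kkm_real_line_finite_general
    (A : Finset ℝ) (D : ℝ → Set ℝ)
    (hclosed : ∀ a ∈ A, IsClosed (D a))
    (hmem : ∀ a ∈ A, a ∈ D a)
    (hpath : ∀ a ∈ A, ∀ b ∈ A, Set.uIcc a b ⊆ D a ∪ D b) :
    (⋂ a ∈ A, D a).Nonempty :=
  KKM.nonempty_biInter_of_uIcc_subset_union A.bddBelow A.bddAbove hclosed hmem hpath

/-- **KKM theorem on the real line (finite covers).** If `A` is a nonempty finite set of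
reals and, for each `a ∈ A`, `D a` is a closed set containing `a` such that the segment
between any two points `a, b ∈ A` is covered by `D a ∪ D b`, then all the sets `D a`,
`a ∈ A`, have a common point. -/
theorem kkm_real_line_finite
    (A : Finset ℝ) (hA : A.Nonempty) (D : ℝ → Set ℝ)
    (hclosed : ∀ a ∈ A, IsClosed (D a))
    (hmem : ∀ a ∈ A, a ∈ D a)
    (hpath : ∀ a ∈ A, ∀ b ∈ A, Set.uIcc a b ⊆ D a ∪ D b) :
    (⋂ a ∈ A, D a).Nonempty :=
  kkm_real_line_finite_general A D hclosed hmem hpath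
end

section
/- Let A be a set of real numbers (possibly infinite) and for each a ∈ A let D(a) ⊆ ℝ be a closed set with a ∈ D(a). Suppose that for all a, b ∈ A, the closed interval between a and b (Set.uIcc a b) is contained in D(a) ∪ D(b), and that D(a₀) is compact for at least one a₀ ∈ A. Then the intersection ⋂_{a ∈ A} D(a) is nonempty. -/
/-!
Call `x` left-uncovered if `x ∉ D a` for some `a ∈ A` with `a < x`, and right-uncovered if
`x ∉ D b` for some `b ∈ A` with `x < b`. Both sets are open since the `D a` are closed, and
they are disjoint since `[a, b] ⊆ D a ∪ D b`. If no point lay in every `D a`, they would cover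
the line (the case `a = x` is excluded by `a ∈ D a`), so by connectedness one of them would be
everything. But a point `x` strictly below the bounded set `D a₀` is not left-uncovered:
for `a ≤ x` it lies in `[a, a₀]` and not in `D a₀`, hence in `D a`. Symmetrically a point
strictly above `D a₀` is not right-uncovered.
-/

open Set

section

variable {α : Type*} [LinearOrder α] {A : Set α} {D : α → Set α}

theorem mem_of_le_of_forall_lt (hpath : ∀ a ∈ A, ∀ b ∈ A, uIcc a b ⊆ D a ∪ D b)
    {a₀ x a : α} (ha₀ : a₀ ∈ A) (hmem₀ : a₀ ∈ D a₀) (hx : ∀ y ∈ D a₀, x < y)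
    (ha : a ∈ A) (hax : a ≤ x) : x ∈ D a :=
  (hpath a ha a₀ ha₀ (mem_uIcc_of_le hax (hx a₀ hmem₀).le)).resolve_right
    fun h => lt_irrefl x (hx x h)

theorem mem_of_ge_of_forall_gt (hpath : ∀ a ∈ A, ∀ b ∈ A, uIcc a b ⊆ D a ∪ D b)
    {a₀ x b : α} (ha₀ : a₀ ∈ A) (hmem₀ : a₀ ∈ D a₀) (hx : ∀ y ∈ D a₀, y < x)
    (hb : b ∈ A) (hxb : x ≤ b) : x ∈ D b :=
  (hpath b hb a₀ ha₀ (mem_uIcc_of_ge (hx a₀ hmem₀).le hxb)).resolve_right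
    fun h => lt_irrefl x (hx x h)

variable [TopologicalSpace α] [OrderClosedTopology α]

theorem biInter_nonempty_of_mem_left_of_mem_right [PreconnectedSpace α]
    (hclosed : ∀ a ∈ A, IsClosed (D a)) (hmem : ∀ a ∈ A, a ∈ D a)
    (hpath : ∀ a ∈ A, ∀ b ∈ A, uIcc a b ⊆ D a ∪ D b) {l r : α}
    (hl : ∀ a ∈ A, a ≤ l → l ∈ D a) (hr : ∀ b ∈ A, r ≤ b → r ∈ D b) :
    (⋂ a ∈ A, D a).Nonempty := by
  set L := ⋃ a ∈ A, Ioi a ∩ (D a)ᶜ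
  set R := ⋃ b ∈ A, Iio b ∩ (D b)ᶜ
  have hL : IsOpen L := isOpen_biUnion fun a ha => isOpen_Ioi.inter (hclosed a ha).isOpen_compl
  have hR : IsOpen R := isOpen_biUnion fun b hb => isOpen_Iio.inter (hclosed b hb).isOpen_compl
  have hLR : Disjoint L R := by
    simp only [L, R, disjoint_left, mem_iUnion, mem_inter_iff, mem_Ioi, mem_Iio, mem_compl_iff]
    rintro x ⟨a, ha, hax, hxa⟩ ⟨b, hb, hxb, hxb'⟩
    rcases hpath a ha b hb (mem_uIcc_of_le hax.le hxb.le) with h | h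
    exacts [hxa h, hxb' h]
  by_contra hempty
  have hcover : univ ⊆ L ∪ R := by
    intro x _
    have hx : x ∉ ⋂ a ∈ A, D a := fun hx => hempty ⟨x, hx⟩
    simp only [mem_iInter, not_forall] at hx
    obtain ⟨a, ha, hxa⟩ := hx
    simp only [L, R, mem_union, mem_iUnion, mem_inter_iff, mem_Ioi, mem_Iio, mem_compl_iff]
    rcases lt_trichotomy a x with hax | rfl | hxa'
    · exact Or.inl ⟨a, ha, hax, hxa⟩
    · exact absurd (hmem a ha) hxa
    · exact Or.inr ⟨a, ha, hxa', hxa⟩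
  rcases isPreconnected_univ.subset_or_subset hL hR hLR hcover with h | h
  · obtain ⟨a, ha, hal, hla⟩ := mem_iUnion₂.1 (h (mem_univ l))
    exact hla (hl a ha hal.le)
  · obtain ⟨b, hb, hrb, hrb'⟩ := mem_iUnion₂.1 (h (mem_univ r))
    exact hrb' (hr b hb hrb.le)

theorem biInter_nonempty_of_bddBelow_of_bddAbove
    [PreconnectedSpace α] [NoMinOrder α] [NoMaxOrder α]
    (hclosed : ∀ a ∈ A, IsClosed (D a)) (hmem : ∀ a ∈ A, a ∈ D a)
    (hpath : ∀ a ∈ A, ∀ b ∈ A, uIcc a b ⊆ D a ∪ D b) {a₀ : α} (ha₀ : a₀ ∈ A)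
    (hbelow : BddBelow (D a₀)) (habove : BddAbove (D a₀)) :
    (⋂ a ∈ A, D a).Nonempty := by
  obtain ⟨c, hc⟩ := hbelow
  obtain ⟨l, hlc⟩ := exists_lt c
  obtain ⟨d, hd⟩ := habove
  obtain ⟨r, hdr⟩ := exists_gt d
  exact biInter_nonempty_of_mem_left_of_mem_right hclosed hmem hpath
    (fun a ha => mem_of_le_of_forall_lt hpath ha₀ (hmem a₀ ha₀)
      (fun y hy => hlc.trans_le (hc hy)) ha)
    (fun b hb => mem_of_ge_of_forall_gt hpath ha₀ (hmem a₀ ha₀)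
      (fun y hy => (hd hy).trans_lt hdr) hb)

end

/-- **KKM theorem on the real line (possibly infinite covers).** If `A` is a set of
reals and, for each `a ∈ A`, `D a` is a closed set containing `a` such that the segment
between any two points `a, b ∈ A` is covered by `D a ∪ D b`, and at least one of the
sets `D a₀`, `a₀ ∈ A`, is compact, then all the sets `D a`, `a ∈ A`, have a common
point. -/
theorem kkm_real_line_infinite
    (A : Set ℝ) (D : ℝ → Set ℝ)
    (hclosed : ∀ a ∈ A, IsClosed (D a))
    (hmem : ∀ a ∈ A, a ∈ D a)
    (hpath : ∀ a ∈ A, ∀ b ∈ A, Set.uIcc a b ⊆ D a ∪ D b)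
    (hcompact : ∃ a₀ ∈ A, IsCompact (D a₀)) :
    (⋂ a ∈ A, D a).Nonempty := by
  obtain ⟨a₀, ha₀, hK⟩ := hcompact
  exact biInter_nonempty_of_bddBelow_of_bddAbove hclosed hmem hpath ha₀ hK.bddBelow hK.bddAbove
end

section
/- Let S¹ denote the circle ℝ/ℤ (AddCircle (1 : ℝ)) with its quotient topology. Let n ≥ 1, let v : Fin n → S¹ be an injective family of points, and let D : Fin n → Set S¹ be a family of closed sets with v(i) ∈ D(i) for each i. Suppose that for every pair i, j there is a connected subset C of S¹ with v(i) ∈ C, v(j) ∈ C, and C ⊆ D(i) ∪ D(j). Then there exists a point x ∈ S¹ that belongs to at least ⌊n/2⌋ + 1 of the sets, i.e., n/2 + 1 ≤ |{i : x ∈ D(i)}| where n/2 is natural-number (floor) division and the cardinality is taken as a Finset card over Fin n. -/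
open Classical

open Set Filter Topology

/- Suppose no point lies in more than `n / 2` of the sets. Cutting the circle at any point `x`
turns the sets missing `x` into a KKM cover of the line (a connected set covered by `D i ∪ D j`
avoids `x`, so it lifts to an interval), and such sets share a point. Hence at most `n / 2` sets
miss `x`, so every point lies in exactly `n / 2` sets. This locally constant count makes each
closed `D i` open as well, hence the whole circle, which contradicts `n ≥ 1`. -/

theorem exists_forall_mem_of_Icc_subset_union {α ι : Type*} [LinearOrder α] [TopologicalSpace α]
    [OrderClosedTopology α] [ConnectedSpace α] (s : Finset ι) (t : ι → α) (P : ι → Set α)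
    (hP : ∀ i ∈ s, IsClosed (P i)) (ht : ∀ i ∈ s, t i ∈ P i)
    (hcov : ∀ i ∈ s, ∀ j ∈ s, Icc (t i) (t j) ⊆ P i ∪ P j) :
    ∃ x, ∀ i ∈ s, x ∈ P i := by
  obtain rfl | hs := s.eq_empty_or_nonempty
  · simp
  by_contra! h
  -- The points missed by some set to their left and those missed by some set to their right
  -- would be disjoint nonempty open sets covering the space.
  set L := ⋃ i ∈ s, Ioi (t i) ∩ (P i)ᶜ
  set R := ⋃ i ∈ s, Iio (t i) ∩ (P i)ᶜ
  have hL : IsOpen L := isOpen_biUnion fun i hi => isOpen_Ioi.inter (hP i hi).isOpen_compl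
  have hR : IsOpen R := isOpen_biUnion fun i hi => isOpen_Iio.inter (hP i hi).isOpen_compl
  have missed : ∀ x, ∃ i ∈ s, x ∉ P i ∧ x ≠ t i := fun x =>
    (h x).imp fun i ⟨hi, hx⟩ => ⟨hi, hx, fun hxt => hx (hxt ▸ ht i hi)⟩
  have hcover : univ ⊆ L ∪ R := fun x _ => by
    obtain ⟨i, hi, hx, hxt⟩ := missed x
    rcases hxt.lt_or_gt with hlt | hgt
    · exact Or.inr (mem_biUnion hi ⟨hlt, hx⟩)
    · exact Or.inl (mem_biUnion hi ⟨hgt, hx⟩)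
  obtain ⟨a, -, hmin⟩ := s.exists_min_image t hs
  obtain ⟨b, -, hmax⟩ := s.exists_max_image t hs
  have haR : t a ∈ R := by
    obtain ⟨i, hi, hx, hxt⟩ := missed (t a)
    exact mem_biUnion hi ⟨(hmin i hi).lt_of_ne hxt, hx⟩
  have hbL : t b ∈ L := by
    obtain ⟨i, hi, hx, hxt⟩ := missed (t b)
    exact mem_biUnion hi ⟨(hmax i hi).lt_of_ne hxt.symm, hx⟩
  obtain ⟨x, -, hxL, hxR⟩ :=
    isPreconnected_univ L R hL hR hcover ⟨t b, trivial, hbL⟩ ⟨t a, trivial, haR⟩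
  simp only [L, R, mem_iUnion₂, mem_inter_iff, mem_compl_iff] at hxL hxR
  obtain ⟨i, hi, hix, hxPi⟩ := hxL
  obtain ⟨j, hj, hxj, hxPj⟩ := hxR
  exact (hcov i hi j hj ⟨hix.le, hxj.le⟩).elim hxPi hxPj

theorem AddCircle.Icc_subset_preimage_of_isPreconnected {p : ℝ} [Fact (0 < p)] {a : ℝ}
    {C : Set (AddCircle p)} (hC : IsPreconnected C) (ha : (a : AddCircle p) ∉ C) {x y : AddCircle p}
    (hx : x ∈ C) (hy : y ∈ C) :
    Icc (equivIco p a x : ℝ) (equivIco p a y) ⊆ (↑) ⁻¹' C := by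
  set f : AddCircle p → ℝ := fun z => equivIco p a z
  have hcont : ContinuousOn f C := fun z hz =>
    (continuous_subtype_val.continuousAt.comp
      (continuousAt_equivIco p a (ne_of_mem_of_not_mem hz ha))).continuousWithinAt
  refine ((hC.image f hcont).Icc_subset (mem_image_of_mem f hx) (mem_image_of_mem f hy)).trans ?_
  rintro _ ⟨z, hz, rfl⟩
  rwa [mem_preimage, coe_equivIco]

theorem AddCircle.exists_forall_mem_of_notMem {p : ℝ} [Fact (0 < p)] {ι : Type*} [Fintype ι]
    {v : ι → AddCircle p} {D : ι → Set (AddCircle p)} (hclosed : ∀ i, IsClosed (D i))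
    (hmem : ∀ i, v i ∈ D i)
    (hpath : ∀ i j, ∃ C, IsPreconnected C ∧ v i ∈ C ∧ v j ∈ C ∧ C ⊆ D i ∪ D j)
    (x : AddCircle p) : ∃ y, ∀ i, x ∉ D i → y ∈ D i := by
  obtain ⟨a, rfl⟩ := QuotientAddGroup.mk_surjective x
  obtain ⟨y, hy⟩ := exists_forall_mem_of_Icc_subset_union (Finset.univ.filter fun i => ↑a ∉ D i)
    (fun i => (equivIco p a (v i) : ℝ)) (fun i => ((↑) : ℝ → AddCircle p) ⁻¹' D i)
    (fun i _ => (hclosed i).preimage continuous_quotient_mk')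
    (fun i _ => by simpa only [mem_preimage, coe_equivIco] using hmem i)
    (fun i hi j hj => by
      obtain ⟨C, hC, hiC, hjC, hCD⟩ := hpath i j
      have haC : (a : AddCircle p) ∉ C := fun haC => by
        simp only [Finset.mem_filter] at hi hj
        exact (hCD haC).elim hi.2 hj.2
      exact (Icc_subset_preimage_of_isPreconnected hC haC hiC hjC).trans (preimage_mono hCD))
  exact ⟨y, fun i hi => hy i (by simpa using hi)⟩

theorem eventually_filter_mem_subset {X ι : Type*} [TopologicalSpace X] [Fintype ι]
    {D : ι → Set X} (hD : ∀ i, IsClosed (D i)) (x : X) :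
    ∀ᶠ y in 𝓝 x, Finset.univ.filter (fun i => y ∈ D i) ⊆ Finset.univ.filter (fun i => x ∈ D i) := by
  have hnear : ∀ᶠ y in 𝓝 x, ∀ i, y ∈ D i → x ∈ D i := by
    refine eventually_all.2 fun i => ?_
    by_cases hx : x ∈ D i
    · exact .of_forall fun _ _ => hx
    · filter_upwards [(hD i).isOpen_compl.mem_nhds hx] with y hy hyD using absurd hyD hy
  filter_upwards [hnear] with y hy i
  simpa using hy i

theorem isOpen_of_card_filter_mem_eq {X ι : Type*} [TopologicalSpace X] [Fintype ι]
    {D : ι → Set X} (hD : ∀ i, IsClosed (D i)) {k : ℕ}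
    (hk : ∀ x, (Finset.univ.filter fun i => x ∈ D i).card = k) (i : ι) : IsOpen (D i) := by
  refine isOpen_iff_mem_nhds.2 fun x hx => ?_
  filter_upwards [eventually_filter_mem_subset hD x] with y hy
  have hix : i ∈ Finset.univ.filter fun i => x ∈ D i := by simpa using hx
  rw [← Finset.eq_of_subset_of_card_le hy (by rw [hk, hk])] at hix
  simpa using hix

theorem kkm_cycle_general
    (n : ℕ) (hn : 1 ≤ n)
    (v : Fin n → AddCircle (1 : ℝ))
    (D : Fin n → Set (AddCircle (1 : ℝ)))
    (hclosed : ∀ i, IsClosed (D i))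
    (hmem : ∀ i, v i ∈ D i)
    (hpath : ∀ i j, ∃ C : Set (AddCircle (1 : ℝ)),
      IsConnected C ∧ v i ∈ C ∧ v j ∈ C ∧ C ⊆ D i ∪ D j) :
    ∃ x : AddCircle (1 : ℝ),
      n / 2 + 1 ≤ (Finset.univ.filter (fun i : Fin n => x ∈ D i)).card := by
  by_contra! hsmall
  have hmissing : ∀ x, n - n / 2 ≤ (Finset.univ.filter fun i => x ∈ D i).card := fun x => by
    obtain ⟨y, hy⟩ := AddCircle.exists_forall_mem_of_notMem hclosed hmem
      (fun i j => (hpath i j).imp fun _ hC => ⟨hC.1.isPreconnected, hC.2⟩) x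
    have hsub : Finset.univ.filter (fun i => x ∉ D i) ⊆ Finset.univ.filter fun i => y ∈ D i :=
      fun i hi => by simpa using hy i (by simpa using hi)
    have hsplit := Finset.card_filter_add_card_filter_not (s := Finset.univ) (fun i => x ∈ D i)
    rw [Finset.card_univ, Fintype.card_fin] at hsplit
    have := Finset.card_le_card hsub
    have := hsmall y
    omega
  have hconst : ∀ x, (Finset.univ.filter fun i => x ∈ D i).card = n / 2 := fun x => by
    have := hmissing x
    have := hsmall x
    omega
  have huniv : ∀ i, D i = univ := fun i =>
    IsClopen.eq_univ ⟨hclosed i, isOpen_of_card_filter_mem_eq hclosed hconst i⟩ ⟨v i, hmem i⟩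
  have := hconst 0
  simp only [huniv, mem_univ, Finset.filter_true, Finset.card_univ, Fintype.card_fin] at this
  omega

/-- **KKM theorem for cycles.** Let `v : Fin n → S¹` (with `n ≥ 1`) be injective points
of the circle `S¹ = ℝ/ℤ` and let `D : Fin n → Set S¹` be closed sets with `v i ∈ D i`,
such that for every pair `i, j` some connected subset of `S¹` containing `v i` and `v j`
is covered by `D i ∪ D j` (i.e. at least one arc between `v i` and `v j` is covered).
Then some point of `S¹` lies in at least `⌊n / 2⌋ + 1` of the sets `D i`. -/
theorem kkm_cycle
    (n : ℕ) (hn : 1 ≤ n)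
    (v : Fin n → AddCircle (1 : ℝ)) (hv : Function.Injective v)
    (D : Fin n → Set (AddCircle (1 : ℝ)))
    (hclosed : ∀ i, IsClosed (D i))
    (hmem : ∀ i, v i ∈ D i)
    (hpath : ∀ i j, ∃ C : Set (AddCircle (1 : ℝ)),
      IsConnected C ∧ v i ∈ C ∧ v j ∈ C ∧ C ⊆ D i ∪ D j) :
    ∃ x : AddCircle (1 : ℝ),
      n / 2 + 1 ≤ (Finset.univ.filter (fun i : Fin n => x ∈ D i)).card :=
  kkm_cycle_general n hn v D hclosed hmem hpath
end

section
/- Let S¹ denote the circle ℝ/ℤ (AddCircle (1 : ℝ)) with its quotient topology, modeling a circular political spectrum. Consider a society of n ≥ 1 voters where voter i has position v(i) ∈ S¹, the positions v : Fin n → S¹ are injective, and voter i has a closed approval set A(i) ⊆ S¹ with v(i) ∈ A(i). Suppose the society is super-agreeable: for every pair of voters i, j there is a connected subset C of S¹ with v(i) ∈ C, v(j) ∈ C, and C ⊆ A(i) ∪ A(j). Then there is an option approved by a strict majority of the voters: there exists x ∈ S¹ with 2 · |{i : x ∈ A(i)}| > n, the cardinality taken as a Finset card over Fin n. -/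
open Classical

/-!
Suppose no option is approved by a strict majority. Cutting the circle at an option `x` turns
the voters who reject `x` into a super-agreeable society on a line, and such a society has an
option `y` approved by all of its members: of the maximal intervals `[v i, r i] ⊆ A i`, the
smallest right end `r k` works. So the rejecters of `x` are at most the approvers of `y`, at
most `n / 2`, and every option is approved by exactly `n / 2` voters. Near any point approvals
can only be lost, never gained, since the approval sets are closed; with a constant count
nothing is lost either, so every `A i` is clopen, hence the whole circle, and then `2 n = n`.
-/

open Set Filter Topology
open scoped Finset

/-- The cap `M` keeps the supremum away from its junk value when `[a, ∞) ⊆ s`. -/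
noncomputable def rightReach (s : Set ℝ) (a M : ℝ) : ℝ :=
  sSup {t | t ∈ Icc a M ∧ Icc a t ⊆ s}

section rightReach

variable {s : Set ℝ} {a M t : ℝ}

lemma le_rightReach (ht : t ∈ Icc a M) (hts : Icc a t ⊆ s) : t ≤ rightReach s a M :=
  le_csSup ⟨M, fun _ hu => hu.1.2⟩ ⟨ht, hts⟩

lemma self_le_rightReach (ha : a ∈ s) (haM : a ≤ M) : a ≤ rightReach s a M :=
  le_rightReach ⟨le_rfl, haM⟩ (by simpa using ha)

lemma Icc_rightReach_subset (hs : IsClosed s) (ha : a ∈ s) (haM : a ≤ M) :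
    Icc a (rightReach s a M) ⊆ s := by
  have hne : {t | t ∈ Icc a M ∧ Icc a t ⊆ s}.Nonempty :=
    ⟨a, ⟨le_rfl, haM⟩, by simpa using ha⟩
  have hIco : Ico a (rightReach s a M) ⊆ s := fun u hu => by
    obtain ⟨t, ⟨-, hts⟩, hut⟩ := exists_lt_of_lt_csSup hne hu.2
    exact hts ⟨hu.1, hut.le⟩
  rcases (self_le_rightReach ha haM).eq_or_lt with heq | hlt
  · simpa [← heq] using ha
  · simpa [closure_Ico hlt.ne] using (hs.closure_subset_iff.2 hIco)

end rightReach

lemma exists_forall_mem_of_uIcc_subset_union {ι : Type*} [Finite ι] {v : ι → ℝ}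
    {A : ι → Set ℝ} (hA : ∀ i, IsClosed (A i)) (hv : ∀ i, v i ∈ A i)
    (hcover : ∀ i j, uIcc (v i) (v j) ⊆ A i ∪ A j) : ∃ y, ∀ i, y ∈ A i := by
  rcases isEmpty_or_nonempty ι with hι | hι
  · exact ⟨0, isEmptyElim⟩
  obtain ⟨M, hM⟩ := (finite_range v).bddAbove
  have hvM : ∀ i, v i ≤ M := fun i => hM (mem_range_self i)
  set r := fun i => rightReach (A i) (v i) M
  have hr : ∀ i, Icc (v i) (r i) ⊆ A i := fun i => Icc_rightReach_subset (hA i) (hv i) (hvM i)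
  obtain ⟨k, hk⟩ := Finite.exists_min r
  refine ⟨r k, fun i => ?_⟩
  rcases le_or_gt (v i) (r k) with hle | hlt
  · exact hr i ⟨hle, hk i⟩
  -- The points just right of `r k` missed by `A k` lie in `[v k, v i]`, so `A i` catches them.
  have hvk : v k ≤ r k := self_le_rightReach (hv k) (hvM k)
  suffices hfreq : ∃ᶠ u in 𝓝[>] r k, u ∈ A i from
    (hA i).closure_subset (mem_closure_iff_frequently.2 (hfreq.filter_mono nhdsWithin_le_nhds))
  refine (nhdsGT_basis_Ioc (r k)).frequently_iff.2 fun t ht => ?_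
  have hkt : r k < min t (v i) := lt_min ht hlt
  have hnot : ¬ Icc (v k) (min t (v i)) ⊆ A k := fun hsub =>
    hkt.not_ge (le_rightReach ⟨hvk.trans hkt.le, (min_le_right _ _).trans (hvM i)⟩ hsub)
  obtain ⟨u, hu, huA⟩ := not_subset.1 hnot
  have hku : r k < u := lt_of_not_ge fun h => huA (hr k ⟨hu.1, h⟩)
  refine ⟨u, ⟨hku, hu.2.trans (min_le_left _ _)⟩, ?_⟩
  have hu_ki : u ∈ uIcc (v k) (v i) := by
    rw [uIcc_of_le (hvk.trans hlt.le)]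
    exact ⟨hu.1, hu.2.trans (min_le_right _ _)⟩
  exact (hcover k i hu_ki).resolve_left huA

namespace AddCircle

variable {p : ℝ} [Fact (0 < p)]

lemma uIcc_equivIoc_subset_preimage (a : ℝ) {C : Set (AddCircle p)} (hC : IsPreconnected C)
    (haC : (a : AddCircle p) ∉ C) {x y : AddCircle p} (hx : x ∈ C) (hy : y ∈ C) :
    uIcc (equivIoc p a x : ℝ) (equivIoc p a y) ⊆ (↑) ⁻¹' C := by
  set lift : AddCircle p → ℝ := fun z => equivIoc p a z
  have hlift : ContinuousOn lift C := fun z hz =>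
    (continuous_subtype_val.continuousAt.comp
      (continuousAt_equivIoc p a fun h => haC (h ▸ hz))).continuousWithinAt
  intro t ht
  obtain ⟨z, hz, rfl⟩ := ((hC.image lift hlift).ordConnected.uIcc_subset
    (mem_image_of_mem lift hx) (mem_image_of_mem lift hy)) ht
  simpa [lift] using hz

lemma exists_forall_mem_of_forall_notMem {ι : Type*} [Finite ι] {v : ι → AddCircle p}
    {A : ι → Set (AddCircle p)} (hA : ∀ i, IsClosed (A i)) (hv : ∀ i, v i ∈ A i)
    (hagree : ∀ i j, ∃ C : Set (AddCircle p),
      IsConnected C ∧ v i ∈ C ∧ v j ∈ C ∧ C ⊆ A i ∪ A j)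
    {x : AddCircle p} (hx : ∀ i, x ∉ A i) : ∃ y, ∀ i, y ∈ A i := by
  obtain ⟨a, rfl⟩ := QuotientAddGroup.mk_surjective x
  obtain ⟨y, hy⟩ := exists_forall_mem_of_uIcc_subset_union (v := fun i => equivIoc p a (v i))
    (A := fun i => (↑) ⁻¹' A i) (fun i => (hA i).preimage (AddCircle.continuous_mk' p))
    (fun i => by simpa using hv i) fun i j => by
      obtain ⟨C, hC, hiC, hjC, hCA⟩ := hagree i j
      have haC : ((a : ℝ) : AddCircle p) ∉ C := fun h => (hCA h).elim (hx i) (hx j)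
      exact (uIcc_equivIoc_subset_preimage a hC.isPreconnected haC hiC hjC).trans
        (preimage_mono hCA)
  exact ⟨y, hy⟩

end AddCircle

lemma isOpen_of_forall_card_filter_mem_eq {X ι : Type*} [TopologicalSpace X] [Fintype ι]
    {A : ι → Set X} (hA : ∀ i, IsClosed (A i)) {c : ℕ} (hcard : ∀ x, #{i | x ∈ A i} = c)
    (i : ι) : IsOpen (A i) := by
  refine isOpen_iff_mem_nhds.2 fun x hx => ?_
  have hnear : ∀ᶠ y in 𝓝 x, ∀ j, y ∈ A j → x ∈ A j :=
    eventually_all.2 fun j => by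
      by_cases hj : x ∈ A j
      · exact Eventually.of_forall fun _ _ => hj
      · exact mem_of_superset ((hA j).isOpen_compl.mem_nhds hj) fun _ hy h => (hy h).elim
  filter_upwards [hnear] with y hy
  have hsub : ({j | y ∈ A j} : Finset ι) ⊆ ({j | x ∈ A j} : Finset ι) :=
    Finset.monotone_filter_right _ fun j _ => hy j
  have heq := Finset.eq_of_subset_of_card_le hsub (by rw [hcard, hcard])
  have hi : i ∈ ({j | y ∈ A j} : Finset ι) := by rw [heq]; simpa using hx
  simpa using hi

theorem circular_society_majority_general
    (n : ℕ) (hn : 1 ≤ n)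
    (v : Fin n → AddCircle (1 : ℝ))
    (A : Fin n → Set (AddCircle (1 : ℝ)))
    (hclosed : ∀ i, IsClosed (A i))
    (hmem : ∀ i, v i ∈ A i)
    (hagree : ∀ i j, ∃ C : Set (AddCircle (1 : ℝ)),
      IsConnected C ∧ v i ∈ C ∧ v j ∈ C ∧ C ⊆ A i ∪ A j) :
    ∃ x : AddCircle (1 : ℝ),
      2 * (Finset.univ.filter (fun i : Fin n => x ∈ A i)).card > n := by
  by_contra! hminority
  have hhalf : ∀ x, 2 * #{i | x ∈ A i} = n := by
    intro x
    obtain ⟨y, hy⟩ := AddCircle.exists_forall_mem_of_forall_notMem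
      (v := fun i : {i // x ∉ A i} => v i) (fun i => hclosed i) (fun i => hmem i)
      (fun i j => hagree i j) fun i => i.2
    have hcover : n ≤ #{i | x ∈ A i} + #{i | y ∈ A i} := calc
      n = #{i | x ∈ A i} + #{i | x ∉ A i} := by
        simpa using (Finset.card_filter_add_card_filter_not (s := Finset.univ) (x ∈ A ·)).symm
      _ ≤ #{i | x ∈ A i} + #{i | y ∈ A i} := by
        gcongr #{i | x ∈ A i} + ?_
        exact Finset.card_le_card (Finset.monotone_filter_right _ fun i _ hi => hy ⟨i, hi⟩)
    have := hminority x
    have := hminority y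
    omega
  have huniv : ∀ i, A i = univ := fun i =>
    IsClopen.eq_univ ⟨hclosed i, isOpen_of_forall_card_filter_mem_eq hclosed (c := n / 2)
      (fun x => by have := hhalf x; omega) i⟩ ⟨v i, hmem i⟩
  have := hhalf (v ⟨0, hn⟩)
  simp only [huniv, mem_univ, Finset.filter_true, Finset.card_univ, Fintype.card_fin] at this
  omega

/-- **Approval voting on a circular spectrum.** In a super-agreeable society of `n ≥ 1`
voters on the circular political spectrum `S¹ = ℝ/ℤ` — voter `i` has position `v i` and
a closed approval set `A i` containing `v i`, and for every pair `i, j` some connected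
subset of the circle containing both positions is covered by `A i ∪ A j` — there is an
option approved by a strict majority of the voters. -/
theorem circular_society_majority
    (n : ℕ) (hn : 1 ≤ n)
    (v : Fin n → AddCircle (1 : ℝ)) (hv : Function.Injective v)
    (A : Fin n → Set (AddCircle (1 : ℝ)))
    (hclosed : ∀ i, IsClosed (A i))
    (hmem : ∀ i, v i ∈ A i)
    (hagree : ∀ i j, ∃ C : Set (AddCircle (1 : ℝ)),
      IsConnected C ∧ v i ∈ C ∧ v j ∈ C ∧ C ⊆ A i ∪ A j) :
    ∃ x : AddCircle (1 : ℝ),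
      2 * (Finset.univ.filter (fun i : Fin n => x ∈ A i)).card > n :=
  circular_society_majority_general n hn v A hclosed hmem hagree
end

section
/- Let S ⊆ ℝ be a nonempty, bounded, connected set (an interval, not necessarily closed), and let f : ℝ → ℝ be continuous on S with f(S) ⊆ S. Suppose f is a compact map in the sense that there exists a compact set K with f(S) ⊆ K ⊆ S. Then f has a fixed point in S: there exists x ∈ S with f(x) = x. -/
open Set

theorem IsPreconnected.exists_fixedPoint_of_mapsTo_isCompact {α : Type*} [LinearOrder α]
    [TopologicalSpace α] [OrderClosedTopology α] {S K : Set α} {f : α → α}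
    (hS : IsPreconnected S) (hSne : S.Nonempty) (hf : ContinuousOn f S)
    (hK : IsCompact K) (hfK : MapsTo f S K) (hKS : K ⊆ S) :
    ∃ x ∈ S, f x = x := by
  obtain ⟨x₀, hx₀⟩ := hSne
  have hKne : K.Nonempty := ⟨f x₀, hfK hx₀⟩
  obtain ⟨M, hMK, hM⟩ := hK.exists_isGreatest hKne
  obtain ⟨m, hmK, hm⟩ := hK.exists_isLeast hKne
  have hfM : f M ≤ M := hM (hfK (hKS hMK))
  have hfm : m ≤ f m := hm (hfK (hKS hmK))
  exact hS.intermediate_value₂ (hKS hMK) (hKS hmK) hf continuousOn_id hfM hfm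

theorem bounded_interval_compact_fixed_point_general
    (S : Set ℝ) (hne : S.Nonempty)
    (hconn : IsPreconnected S)
    (f : ℝ → ℝ) (hf : ContinuousOn f S)
    (hcompact : ∃ K : Set ℝ, IsCompact K ∧ f '' S ⊆ K ∧ K ⊆ S) :
    ∃ x ∈ S, f x = x := by
  obtain ⟨K, hK, hfK, hKS⟩ := hcompact
  exact hconn.exists_fixedPoint_of_mapsTo_isCompact hne hf hK (image_subset_iff.mp hfK) hKS

/-- **Fixed point theorem for compact self-maps of a bounded interval.** Let `S ⊆ ℝ` be
a nonempty bounded connected set (an interval, not necessarily closed), and let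
`f : ℝ → ℝ` be continuous on `S` with `f(S) ⊆ S`. If `f` is a compact map on `S`, i.e.
there is a compact set `K` with `f(S) ⊆ K ⊆ S`, then `f` has a fixed point in `S`. -/
theorem bounded_interval_compact_fixed_point
    (S : Set ℝ) (hne : S.Nonempty) (hbdd : Bornology.IsBounded S)
    (hconn : IsPreconnected S)
    (f : ℝ → ℝ) (hf : ContinuousOn f S) (hmaps : Set.MapsTo f S S)
    (hcompact : ∃ K : Set ℝ, IsCompact K ∧ f '' S ⊆ K ∧ K ⊆ S) :
    ∃ x ∈ S, f x = x :=
  bounded_interval_compact_fixed_point_general S hne hconn f hf hcompact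
end

section
/- Let f : ℝ → ℝ be continuous, and for each a ∈ ℝ define the move-away set D(a) = {x ∈ ℝ : |x − a| ≤ |f(x) − a|}. Then the family {D(a) : a ∈ ℝ} is a KKM cover of the line: (i) each D(a) is closed; (ii) a ∈ D(a) for every a; and (iii) for all a, b ∈ ℝ, the closed interval between a and b (Set.uIcc a b) is contained in D(a) ∪ D(b). -/
theorem dist_le_or_dist_le_of_dist_add_dist_eq {X : Type*} [PseudoMetricSpace X] {a b x : X}
    (hx : dist a x + dist x b = dist a b) (y : X) :
    dist x a ≤ dist y a ∨ dist x b ≤ dist y b := by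
  by_contra! h
  have : dist a b < dist a b := calc
    dist a b ≤ dist a y + dist y b := dist_triangle a y b
    _ = dist y a + dist y b := by rw [dist_comm a y]
    _ < dist x a + dist x b := add_lt_add h.1 h.2
    _ = dist a b := by rw [dist_comm x a, hx]
  exact lt_irrefl _ this

theorem Real.dist_add_dist_of_mem_uIcc {a b x : ℝ} (hx : x ∈ Set.uIcc a b) :
    dist a x + dist x b = dist a b :=
  dist_add_dist_of_mem_segment (segment_eq_uIcc a b ▸ hx)

/-- **The move-away sets of a continuous self-map of the line form a KKM cover.** For a
continuous `f : ℝ → ℝ` and `a : ℝ`, let `D a = {x : |x - a| ≤ |f x - a|}` be the set of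
points that do not move strictly closer to `a` under `f`. Then each `D a` is closed,
contains `a`, and for all `a, b` the segment between `a` and `b` is covered by
`D a ∪ D b`. -/
theorem move_away_kkm_cover
    (f : ℝ → ℝ) (hf : Continuous f) :
    (∀ a : ℝ, IsClosed {x : ℝ | |x - a| ≤ |f x - a|}) ∧
    (∀ a : ℝ, a ∈ {x : ℝ | |x - a| ≤ |f x - a|}) ∧
    (∀ a b : ℝ, Set.uIcc a b ⊆
      {x : ℝ | |x - a| ≤ |f x - a|} ∪ {x : ℝ | |x - b| ≤ |f x - b|}) := by
  refine ⟨fun a => isClosed_le (by fun_prop) (by fun_prop), fun a => by simp, fun a b x hx => ?_⟩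
  simpa only [Set.mem_union, Set.mem_ofPred_eq, Real.dist_eq] using
    dist_le_or_dist_le_of_dist_add_dist_eq (Real.dist_add_dist_of_mem_uIcc hx) (f x)
end
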